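/- With the notation of the CB-NOMA model, the conditional average minimal transmit power diverges as the correlation threshold vanishes: the function t ↦ E_t[P_min] = ∫_t^1 ∫_0^∞ ∫_0^∞ P_min(x,y,z)·g(x)·g(y)·b_t(z) dx dy dz tends to +∞ as t → 0 from the right. -/

import Mathlib

/-!
Since `min (β1 x) (β2 y z) ≤ β2 y z` and `1 / min a b ≤ 1 / a + 1 / b`, the minimal power is
squeezed between two functions of the form `c / x + γ2 / (β2 y z)`. Against the Gamma(M, 1)
density, `1 / x` has mean `1 / (M - 1)`, so conditionally on `z` the mean power is
`γ2 / (β2 (M - 1) z)` up to a bounded term. By Bernoulli's inequality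
`(1 - z) ^ (M - 2) ≥ 1 - (M - 2) z`, integrating `1 / z` against `b_t` gives at least
`(M - 1) (log (1 / t) - (M - 2))`, which diverges as `t → 0⁺`.
-/

open MeasureTheory Set Filter

/-- The density of the Gamma(n + 1, 1) distribution on `(0, ∞)`. -/
noncomputable def gammaDensity (n : ℕ) (x : ℝ) : ℝ :=
  x ^ n * Real.exp (-x) / n.factorial

namespace gammaDensity

lemma integrableOn (n : ℕ) : IntegrableOn (gammaDensity n) (Ioi 0) := by
  have h := Real.GammaIntegral_convergent (show (0 : ℝ) < n + 1 by positivity)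
  simp only [add_sub_cancel_right, Real.rpow_natCast] at h
  exact IntegrableOn.congr_fun (h.div_const (n.factorial : ℝ))
    (fun x _ => by rw [gammaDensity, mul_comm]) measurableSet_Ioi

lemma integral_eq_one (n : ℕ) : ∫ x in Ioi 0, gammaDensity n x = 1 := by
  have h := Real.Gamma_nat_eq_factorial n
  rw [Real.Gamma_eq_integral (by positivity)] at h
  simp only [add_sub_cancel_right, Real.rpow_natCast] at h
  simp only [gammaDensity, integral_div]
  simp only [mul_comm _ (Real.exp _), h]
  exact div_self (by positivity)

lemma div_add_mul_eq {n : ℕ} (hn : n ≠ 0) (C D : ℝ) {x : ℝ} (hx : x ≠ 0) :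
    (C / x + D) * gammaDensity n x =
      C / n * gammaDensity (n - 1) x + D * gammaDensity n x := by
  obtain ⟨k, rfl⟩ := Nat.exists_eq_succ_of_ne_zero hn
  simp only [gammaDensity, Nat.succ_sub_one, Nat.factorial_succ, pow_succ, Nat.cast_mul]
  field_simp

lemma integrableOn_div_add_mul {n : ℕ} (hn : n ≠ 0) (C D : ℝ) :
    IntegrableOn (fun x => (C / x + D) * gammaDensity n x) (Ioi 0) :=
  IntegrableOn.congr_fun
    (((integrableOn (n - 1)).const_mul _).add ((integrableOn n).const_mul _))
    (fun x (hx : 0 < x) => (div_add_mul_eq hn C D hx.ne').symm) measurableSet_Ioi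

lemma integral_div_add_mul {n : ℕ} (hn : n ≠ 0) (C D : ℝ) :
    ∫ x in Ioi 0, (C / x + D) * gammaDensity n x = C / n + D := by
  rw [setIntegral_congr_fun measurableSet_Ioi fun x (hx : 0 < x) => div_add_mul_eq hn C D hx.ne',
    integral_add ((integrableOn (n - 1)).const_mul _) ((integrableOn n).const_mul _),
    integral_const_mul, integral_const_mul, integral_eq_one, integral_eq_one, mul_one, mul_one]

lemma integral_mul_mem_Icc {n : ℕ} (hn : n ≠ 0) {f : ℝ → ℝ}
    (hf : AEStronglyMeasurable f (volume.restrict (Ioi 0))) {C₁ D₁ C₂ D₂ : ℝ}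
    (hbound : ∀ x ∈ Ioi (0 : ℝ), f x ∈ Icc (C₁ / x + D₁) (C₂ / x + D₂)) :
    ∫ x in Ioi 0, f x * gammaDensity n x ∈ Icc (C₁ / n + D₁) (C₂ / n + D₂) := by
  have hmul : ∀ᵐ x ∂volume.restrict (Ioi 0),
      f x * gammaDensity n x ∈ Icc ((C₁ / x + D₁) * gammaDensity n x)
        ((C₂ / x + D₂) * gammaDensity n x) := by
    refine (ae_restrict_iff' measurableSet_Ioi).mpr (ae_of_all _ fun x (hx : 0 < x) => ?_)
    have : 0 ≤ gammaDensity n x := by unfold gammaDensity; positivity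
    exact ⟨mul_le_mul_of_nonneg_right (hbound x hx).1 this,
      mul_le_mul_of_nonneg_right (hbound x hx).2 this⟩
  have hint : IntegrableOn (fun x => f x * gammaDensity n x) (Ioi 0) :=
    integrable_of_le_of_le (hf.mul (by unfold gammaDensity; fun_prop))
      (hmul.mono fun _ h => h.1) (hmul.mono fun _ h => h.2)
      (integrableOn_div_add_mul hn C₁ D₁) (integrableOn_div_add_mul hn C₂ D₂)
  rw [← integral_div_add_mul hn C₁ D₁, ← integral_div_add_mul hn C₂ D₂]
  exact ⟨integral_mono_ae (integrableOn_div_add_mul hn C₁ D₁) hint (hmul.mono fun _ h => h.1),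
    integral_mono_ae hint (integrableOn_div_add_mul hn C₂ D₂) (hmul.mono fun _ h => h.2)⟩

end gammaDensity

/-- The density `b_t` of `z ∼ Beta(1, M - 1)` conditioned on `z ≥ t`. -/
noncomputable def truncBetaDensity (M : ℕ) (t z : ℝ) : ℝ :=
  ((M : ℝ) - 1) * (1 - z) ^ (M - 2) / (1 - t) ^ (M - 1)

namespace truncBetaDensity

variable {M : ℕ} {t z : ℝ}

lemma continuous (M : ℕ) (t : ℝ) : Continuous (truncBetaDensity M t) := by
  unfold truncBetaDensity; fun_prop

lemma nonneg (hM : 1 ≤ M) (ht : t < 1) (hz : z ≤ 1) : 0 ≤ truncBetaDensity M t z := by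
  have : (1 : ℝ) ≤ M := by exact_mod_cast hM
  unfold truncBetaDensity
  exact div_nonneg (mul_nonneg (by linarith) (pow_nonneg (by linarith) _))
    (pow_nonneg (by linarith) _)

lemma integral_eq_one (hM : 2 ≤ M) (ht : t < 1) :
    ∫ z in t..1, truncBetaDensity M t z = 1 := by
  obtain ⟨k, rfl⟩ := Nat.exists_eq_add_of_le' hM
  have h1t : (1 - t) ^ (k + 1) ≠ 0 := pow_ne_zero _ (by linarith)
  simp only [truncBetaDensity, Nat.add_sub_cancel, show k + 2 - 1 = k + 1 by omega]
  rw [intervalIntegral.integral_div, intervalIntegral.integral_const_mul,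
    intervalIntegral.integral_comp_sub_left (fun z => z ^ k), integral_pow]
  push_cast
  field_simp
  ring

lemma mul_one_sub_le (hM : 1 ≤ M) (ht0 : 0 ≤ t) (ht1 : t < 1) (hz : z ≤ 1) :
    ((M : ℝ) - 1) * (1 - (M - 2 : ℕ) * z) ≤ truncBetaDensity M t z := by
  have hM' : (0 : ℝ) ≤ M - 1 := by
    have : (1 : ℝ) ≤ M := by exact_mod_cast hM
    linarith
  have hbernoulli : 1 - (M - 2 : ℕ) * z ≤ (1 - z) ^ (M - 2) := by
    have := one_add_mul_sub_le_pow (a := 1 - z) (by linarith) (M - 2)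
    linarith
  unfold truncBetaDensity
  calc ((M : ℝ) - 1) * (1 - (M - 2 : ℕ) * z) ≤ ((M : ℝ) - 1) * (1 - z) ^ (M - 2) :=
        mul_le_mul_of_nonneg_left hbernoulli hM'
    _ ≤ _ := le_div_self (mul_nonneg hM' (pow_nonneg (by linarith) _))
        (pow_pos (by linarith) _) (pow_le_one₀ (by linarith) (by linarith))

lemma le_integral_inv_mul (hM : 2 ≤ M) (ht0 : 0 < t) (ht1 : t < 1) :
    ((M : ℝ) - 1) * (-Real.log t - (M - 2 : ℕ)) ≤
      ∫ z in t..1, z⁻¹ * truncBetaDensity M t z := by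
  set d : ℝ := ((M - 2 : ℕ) : ℝ)
  have hd : 0 ≤ d := Nat.cast_nonneg _
  have hM' : (0 : ℝ) ≤ M - 1 := by
    have : (2 : ℝ) ≤ M := by exact_mod_cast hM
    linarith
  have hinv : ContinuousOn (fun z : ℝ => z⁻¹) (Icc t 1) :=
    continuousOn_inv₀.mono fun z hz => (ht0.trans_le hz.1).ne'
  have hlow : ∀ z ∈ Icc t 1, ((M : ℝ) - 1) * (z⁻¹ - d) ≤ z⁻¹ * truncBetaDensity M t z := by
    intro z hz
    have hz0 : 0 < z := ht0.trans_le hz.1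
    calc ((M : ℝ) - 1) * (z⁻¹ - d) = z⁻¹ * (((M : ℝ) - 1) * (1 - d * z)) := by
          field_simp
      _ ≤ z⁻¹ * truncBetaDensity M t z :=
          mul_le_mul_of_nonneg_left (mul_one_sub_le (by omega) ht0.le ht1 hz.2)
            (inv_nonneg.mpr hz0.le)
  have hint : ∫ z in t..1, ((M : ℝ) - 1) * (z⁻¹ - d) =
      ((M : ℝ) - 1) * (Real.log t⁻¹ - (1 - t) * d) := by
    rw [intervalIntegral.integral_const_mul, intervalIntegral.integral_sub
      (hinv.intervalIntegrable_of_Icc ht1.le) intervalIntegrable_const,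
      integral_inv_of_pos ht0 one_pos, intervalIntegral.integral_const, one_div, smul_eq_mul]
  calc ((M : ℝ) - 1) * (-Real.log t - d) ≤ ((M : ℝ) - 1) * (Real.log t⁻¹ - (1 - t) * d) := by
        rw [Real.log_inv]
        exact mul_le_mul_of_nonneg_left (by nlinarith) hM'
    _ = _ := hint.symm
    _ ≤ _ := intervalIntegral.integral_mono_on ht1.le
        ((continuousOn_const.mul (hinv.sub continuousOn_const)).intervalIntegrable_of_Icc ht1.le)
        ((hinv.mul (continuous M t).continuousOn).intervalIntegrable_of_Icc ht1.le) hlow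

lemma le_integral_mul (hM : 2 ≤ M) {R : ℝ → ℝ} (hR : Measurable R) {κ B₁ B₂ : ℝ} (hκ : 0 ≤ κ)
    (hbound : ∀ z ∈ Ioc (0 : ℝ) 1, R z ∈ Icc (κ / z + B₁) (κ / z + B₂))
    (ht0 : 0 < t) (ht1 : t < 1) :
    κ * (((M : ℝ) - 1) * (-Real.log t - (M - 2 : ℕ))) + B₁ ≤
      ∫ z in t..1, R z * truncBetaDensity M t z := by
  have hcont : ∀ B, ContinuousOn (fun z => (κ / z + B) * truncBetaDensity M t z) (Icc t 1) :=
    fun B => ((continuousOn_const.div continuousOn_id fun z hz => (ht0.trans_le hz.1).ne').add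
      continuousOn_const).mul (continuous M t).continuousOn
  have hmul : ∀ z ∈ Icc t 1, R z * truncBetaDensity M t z ∈
      Icc ((κ / z + B₁) * truncBetaDensity M t z) ((κ / z + B₂) * truncBetaDensity M t z) := by
    intro z hz
    have hw := nonneg (M := M) (by omega) ht1 hz.2
    have hR := hbound z ⟨ht0.trans_le hz.1, hz.2⟩
    exact ⟨mul_le_mul_of_nonneg_right hR.1 hw, mul_le_mul_of_nonneg_right hR.2 hw⟩
  have hmul_ae : ∀ᵐ z ∂volume.restrict (Ioc t 1), R z * truncBetaDensity M t z ∈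
      Icc ((κ / z + B₁) * truncBetaDensity M t z) ((κ / z + B₂) * truncBetaDensity M t z) :=
    (ae_restrict_iff' measurableSet_Ioc).mpr
      (ae_of_all _ fun z hz => hmul z (Ioc_subset_Icc_self hz))
  have hint : IntervalIntegrable (fun z => R z * truncBetaDensity M t z) volume t 1 :=
    (intervalIntegrable_iff_integrableOn_Ioc_of_le ht1.le).mpr <|
      integrable_of_le_of_le (hR.mul (continuous M t).measurable).aestronglyMeasurable
        (hmul_ae.mono fun _ h => h.1) (hmul_ae.mono fun _ h => h.2)
        ((hcont B₁).integrableOn_Icc.mono_set Ioc_subset_Icc_self)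
        ((hcont B₂).integrableOn_Icc.mono_set Ioc_subset_Icc_self)
  have hinv : IntervalIntegrable (fun z => z⁻¹ * truncBetaDensity M t z) volume t 1 :=
    ContinuousOn.intervalIntegrable_of_Icc ht1.le <|
      (continuousOn_inv₀.mono fun z hz => (ht0.trans_le hz.1).ne').mul
        (continuous M t).continuousOn
  calc κ * (((M : ℝ) - 1) * (-Real.log t - (M - 2 : ℕ))) + B₁
      ≤ κ * (∫ z in t..1, z⁻¹ * truncBetaDensity M t z) +
          B₁ * ∫ z in t..1, truncBetaDensity M t z := by
        rw [integral_eq_one hM ht1, mul_one]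
        gcongr
        exact le_integral_inv_mul hM ht0 ht1
    _ = ∫ z in t..1, (κ / z + B₁) * truncBetaDensity M t z := by
        rw [← intervalIntegral.integral_const_mul, ← intervalIntegral.integral_const_mul,
          ← intervalIntegral.integral_add (hinv.const_mul κ)
            (((continuous M t).intervalIntegrable _ _).const_mul B₁)]
        congr 1 with z
        ring
    _ ≤ _ := intervalIntegral.integral_mono_on ht1.le
        ((hcont B₁).intervalIntegrable_of_Icc ht1.le) hint fun z hz => (hmul z hz).1

lemma tendsto_integral_mul_atTop (hM : 2 ≤ M) {R : ℝ → ℝ} (hR : Measurable R) {κ B₁ B₂ : ℝ}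
    (hκ : 0 < κ) (hbound : ∀ z ∈ Ioc (0 : ℝ) 1, R z ∈ Icc (κ / z + B₁) (κ / z + B₂)) :
    Tendsto (fun t => ∫ z in t..1, R z * truncBetaDensity M t z)
      (nhdsWithin 0 (Ioi 0)) atTop := by
  have hM' : (0 : ℝ) < M - 1 := by
    have : (2 : ℝ) ≤ M := by exact_mod_cast hM
    linarith
  have hlog : Tendsto (fun t => -Real.log t - (M - 2 : ℕ)) (nhdsWithin 0 (Ioi 0)) atTop :=
    tendsto_atTop_add_const_right _ _
      (tendsto_neg_atBot_atTop.comp Real.tendsto_log_nhdsGT_zero)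
  refine tendsto_atTop_mono' _ ?_
    (tendsto_atTop_add_const_right _ B₁ ((hlog.const_mul_atTop hM').const_mul_atTop hκ))
  filter_upwards [Ioo_mem_nhdsGT one_pos] with t ht
  exact le_integral_mul hM hR hκ.le hbound ht.1 ht.2

end truncBetaDensity

noncomputable def minPower (β1 β2 γ1 γ2 x y z : ℝ) : ℝ :=
  γ1 * (1 + γ2) / (β1 * x) + γ2 / min (β1 * x) (β2 * y * z)

/-- The mean of `minPower` over independent `x, y ∼ Gamma(n + 1, 1)`, given `z`. -/
noncomputable def condMeanMinPower (n : ℕ) (β1 β2 γ1 γ2 z : ℝ) : ℝ :=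
  ∫ y in Ioi 0,
    (∫ x in Ioi 0, minPower β1 β2 γ1 γ2 x y z * gammaDensity n x) * gammaDensity n y

lemma div_min_le_div_add_div {c a b : ℝ} (hc : 0 ≤ c) (ha : 0 < a) (hb : 0 < b) :
    c / min a b ≤ c / a + c / b := by
  rcases min_choice a b with h | h <;> rw [h] <;>
    linarith [div_nonneg hc ha.le, div_nonneg hc hb.le]

section MinPower

variable {β1 β2 γ1 γ2 x y z : ℝ}

lemma minPower_mem_Icc (hβ1 : 0 < β1) (hβ2 : 0 < β2) (hγ2 : 0 ≤ γ2)
    (hx : 0 < x) (hy : 0 < y) (hz : 0 < z) :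
    minPower β1 β2 γ1 γ2 x y z ∈ Icc (γ1 * (1 + γ2) / β1 / x + γ2 / (β2 * y * z))
      ((γ1 * (1 + γ2) + γ2) / β1 / x + γ2 / (β2 * y * z)) := by
  have h1 : 0 < β1 * x := by positivity
  have h2 : 0 < β2 * y * z := by positivity
  rw [minPower, div_div, div_div, add_div]
  exact ⟨by gcongr; exact min_le_right _ _, by linarith [div_min_le_div_add_div hγ2 h1 h2]⟩

lemma stronglyMeasurable_integral_minPower_mul (n : ℕ) (β1 β2 γ1 γ2 : ℝ) :
    StronglyMeasurable fun p : ℝ × ℝ =>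
      ∫ x in Ioi 0, minPower β1 β2 γ1 γ2 x p.2 p.1 * gammaDensity n x :=
  StronglyMeasurable.integral_prod_right <| Measurable.stronglyMeasurable <| by
    unfold minPower gammaDensity Function.uncurry; fun_prop

lemma measurable_condMeanMinPower (n : ℕ) (β1 β2 γ1 γ2 : ℝ) :
    Measurable (condMeanMinPower n β1 β2 γ1 γ2) :=
  (StronglyMeasurable.integral_prod_right (f := fun z y =>
    (∫ x in Ioi 0, minPower β1 β2 γ1 γ2 x y z * gammaDensity n x) * gammaDensity n y)
    ((stronglyMeasurable_integral_minPower_mul n β1 β2 γ1 γ2).mul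
      (by unfold gammaDensity; fun_prop))).measurable

lemma condMeanMinPower_mem_Icc {n : ℕ} (hn : n ≠ 0) (hβ1 : 0 < β1) (hβ2 : 0 < β2)
    (hγ2 : 0 ≤ γ2) (hz : 0 < z) :
    condMeanMinPower n β1 β2 γ1 γ2 z ∈ Icc (γ2 / (β2 * n) / z + γ1 * (1 + γ2) / β1 / n)
      (γ2 / (β2 * n) / z + (γ1 * (1 + γ2) + γ2) / β1 / n) := by
  have hinner : ∀ y ∈ Ioi (0 : ℝ),
      ∫ x in Ioi 0, minPower β1 β2 γ1 γ2 x y z * gammaDensity n x ∈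
        Icc (γ2 / (β2 * z) / y + γ1 * (1 + γ2) / β1 / n)
          (γ2 / (β2 * z) / y + (γ1 * (1 + γ2) + γ2) / β1 / n) := by
    intro y hy
    have h := gammaDensity.integral_mul_mem_Icc hn (by unfold minPower; fun_prop)
      fun x hx => minPower_mem_Icc hβ1 hβ2 hγ2 hx hy hz (γ1 := γ1)
    convert h using 2 <;> field_simp <;> ring
  have hmeas : StronglyMeasurable fun y =>
      ∫ x in Ioi 0, minPower β1 β2 γ1 γ2 x y z * gammaDensity n x :=
    (stronglyMeasurable_integral_minPower_mul n β1 β2 γ1 γ2).comp_measurable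
      (measurable_const.prodMk measurable_id)
  have h := gammaDensity.integral_mul_mem_Icc hn hmeas.aestronglyMeasurable hinner
  unfold condMeanMinPower
  convert h using 2 <;> field_simp

end MinPower

theorem cbnoma_avg_power_diverges_general (M : ℕ) (hM : 2 ≤ M)
    (β1 β2 γ1 γ2 : ℝ) (hβ : β2 ≤ β1) (hβ2 : 0 < β2)
    (hγ2 : 0 < γ2) :
    Tendsto
      (fun t : ℝ =>
        ∫ z in t..1, ∫ y in Ioi (0 : ℝ), ∫ x in Ioi (0 : ℝ),
          (γ1 * (1 + γ2) / (β1 * x) + γ2 / min (β1 * x) (β2 * y * z))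
            * (x ^ (M - 1) * Real.exp (-x) / (Nat.factorial (M - 1) : ℝ))
            * (y ^ (M - 1) * Real.exp (-y) / (Nat.factorial (M - 1) : ℝ))
            * (((M : ℝ) - 1) * (1 - z) ^ (M - 2) / (1 - t) ^ (M - 1)))
      (nhdsWithin 0 (Ioi 0)) atTop := by
  have hβ1 : 0 < β1 := hβ2.trans_le hβ
  have hn : M - 1 ≠ 0 := by omega
  have hκ : 0 < γ2 / (β2 * (M - 1 : ℕ)) :=
    div_pos hγ2 (mul_pos hβ2 (Nat.cast_pos.mpr (Nat.pos_of_ne_zero hn)))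
  refine (truncBetaDensity.tendsto_integral_mul_atTop hM
    (measurable_condMeanMinPower (M - 1) β1 β2 γ1 γ2) hκ
    fun z hz => condMeanMinPower_mem_Icc hn hβ1 hβ2 hγ2.le hz.1).congr fun t => ?_
  symm
  simp only [integral_mul_const]
  rfl

/-- The conditional average minimal transmit power of CB-NOMA diverges
to `+∞` as the squared correlation threshold `t` tends to `0⁺`. -/
theorem cbnoma_avg_power_diverges (M : ℕ) (hM : 2 ≤ M)
    (β1 β2 γ1 γ2 : ℝ) (hβ : β2 ≤ β1) (hβ2 : 0 < β2)
    (hγ1 : 0 < γ1) (hγ2 : 0 < γ2) :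
    Tendsto
      (fun t : ℝ =>
        ∫ z in t..1, ∫ y in Ioi (0 : ℝ), ∫ x in Ioi (0 : ℝ),
          (γ1 * (1 + γ2) / (β1 * x) + γ2 / min (β1 * x) (β2 * y * z))
            * (x ^ (M - 1) * Real.exp (-x) / (Nat.factorial (M - 1) : ℝ))
            * (y ^ (M - 1) * Real.exp (-y) / (Nat.factorial (M - 1) : ℝ))
            * (((M : ℝ) - 1) * (1 - z) ^ (M - 2) / (1 - t) ^ (M - 1)))
      (nhdsWithin 0 (Ioi 0)) atTop :=
  cbnoma_avg_power_diverges_general M hM β1 β2 γ1 γ2 hβ hβ2 hγ2
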